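/- Let (X,d,μ) be a space of homogeneous type, let K be an ω-Calderón–Zygmund kernel, and suppose (K, ξ, A, ε, B, B̃) is admissible with B = B(y₀,r), B̃ = B(x₀,r). Suppose T ∈ SIO(K, L^∞_bs(X)), T* ∈ SIO(K*, L^∞_bs(X)), c ≥ 1, and ε ≤ (2cξ²)⁻¹. Then for every f ∈ L^∞₀(B) and every g ∈ L^∞₊(B̃) with 0 < ‖g‖_∞ ≤ (c/μ(B̃)) ∫_{B̃} g dμ, there is a decomposition f = g·Th − h·T*g + f̃, where f̃ ∈ L^∞₀({x ∈ B̃ : g(x) ≠ 0}) and h ∈ L^∞({y ∈ B : f(y) ≠ 0}) satisfy ‖g‖_∞ ‖h‖_∞ ≲_{c,ξ} (μ(B(y₀,Ar))/μ(B̃)) ‖f‖_∞ and ‖f̃‖_∞ ≲_{c,ξ} ε (μ(B)/μ(B̃)) ‖f‖_∞. -/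

import Mathlib

open MeasureTheory Filter Set
open scoped ENNReal NNReal

noncomputable section

namespace SHT

variable {X : Type*}

/-- The quasi-metric ball `B(x,r)`. -/
def qball (d : X → X → ℝ) (x : X) (r : ℝ) : Set X := {y | d x y < r}

/-- Open sets for the topology induced by a quasi-metric. -/
def dOpen (d : X → X → ℝ) (U : Set X) : Prop := ∀ x ∈ U, ∃ r > 0, qball d x r ⊆ U

/-- Closure of a set in the topology induced by a quasi-metric. -/
def dClosure (d : X → X → ℝ) (A : Set X) : Set X :=
  {x | ∀ U : Set X, dOpen d U → x ∈ U → (U ∩ A).Nonempty}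

/-- Support of a function: the closure of its non-vanishing set. -/
def qsupp (d : X → X → ℝ) (f : X → ℂ) : Set X := dClosure d {y | f y ≠ 0}

/-- `(X, d, μ)` is a space of homogeneous type with quasi-metric constant `A₀`
and doubling constant `Cμ`. -/
structure IsSHT [MeasurableSpace X] (d : X → X → ℝ) (μ : Measure X) (A₀ Cμ : ℝ) : Prop where
  one_le_A0 : 1 ≤ A₀
  symm : ∀ x y, d x y = d y x
  nonneg : ∀ x y, 0 ≤ d x y
  eq_zero_iff : ∀ x y, d x y = 0 ↔ x = y
  triangle : ∀ x y z, d x y ≤ A₀ * (d x z + d z y)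
  meas_ball : ∀ (x : X) (r : ℝ), MeasurableSet (qball d x r)
  ball_pos : ∀ (x : X) (r : ℝ), 0 < r → 0 < μ (qball d x r)
  ball_ne_top : ∀ (x : X) (r : ℝ), μ (qball d x r) < ∞
  one_le_Cmu : 1 ≤ Cμ
  doubling : ∀ (x : X) (r : ℝ), 0 < r →
    μ (qball d x (2 * r)) ≤ ENNReal.ofReal Cμ * μ (qball d x r)
  measure_univ : μ Set.univ = ∞
  null_singleton : ∀ x : X, μ {x} = 0

/-- An `ω`-Calderón–Zygmund kernel with size constant `cK`. -/
structure IsCZKernel [MeasurableSpace X] (d : X → X → ℝ) (μ : Measure X) (A₀ : ℝ)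
    (K : X → X → ℂ) (cK : ℝ) (ω : ℝ → ℝ) : Prop where
  size : ∀ x y, x ≠ y →
    norm (K x y) ≤ cK / (μ (qball d x (d x y))).toReal
  regularity : ∀ x x' y, x ≠ y → d x x' < (2 * A₀)⁻¹ * d x y →
    norm (K x y - K x' y) + norm (K y x - K y x')
      ≤ ω (d x x' / d x y) / (μ (qball d x (d x y))).toReal
  omega_cont : ContinuousOn ω (Set.Icc 0 1)
  omega_mono : MonotoneOn ω (Set.Icc 0 1)
  omega_nonneg : ∀ t ∈ Set.Icc (0:ℝ) 1, 0 ≤ ω t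
  omega_subadd : ∀ s t : ℝ, 0 ≤ s → 0 ≤ t → s + t ≤ 1 → ω (s + t) ≤ ω s + ω t
  omega_zero : ω 0 = 0

/-- The Dini condition `∫₀¹ ω(t) dt/t < ∞`. -/
def DiniCondition (ω : ℝ → ℝ) : Prop :=
  MeasureTheory.IntegrableOn (fun t => ω t / t) (Set.Ioo (0:ℝ) 1) MeasureTheory.volume

/-- Non-degeneracy of the kernel: for every `x` and `r > 0` there is
`y ∈ B(x, C̄ r) \ B(x,r)` with `|K(x,y)| ≥ 1/(c₀ μ(B(x,r)))`. -/
def NonDeg [MeasurableSpace X] (d : X → X → ℝ) (μ : Measure X) (K : X → X → ℂ)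
    (c₀ Cb : ℝ) : Prop :=
  ∀ (x : X) (r : ℝ), 0 < r → ∃ y ∈ qball d x (Cb * r) \ qball d x r,
    1 / (c₀ * (μ (qball d x r)).toReal) ≤ norm (K x y)

/-- Dual non-degeneracy of the kernel: for every `y` and `r > 0` there is
`x ∈ B(y, C̄ r) \ B(y,r)` with `|K(x,y)| ≥ 1/(c₀ μ(B(y,r)))`. -/
def NonDegDual [MeasurableSpace X] (d : X → X → ℝ) (μ : Measure X) (K : X → X → ℂ)
    (c₀ Cb : ℝ) : Prop :=
  ∀ (y : X) (r : ℝ), 0 < r → ∃ x ∈ qball d y (Cb * r) \ qball d y r,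
    1 / (c₀ * (μ (qball d y r)).toReal) ≤ norm (K x y)

/-- `w(E) = ∫_E w dμ`. -/
def wInt [MeasurableSpace X] (μ : Measure X) (w : X → ℝ) (E : Set X) : ℝ := ∫ x in E, w x ∂μ

/-- `w` is a positive, locally (on balls) integrable weight. -/
def IsWeight [MeasurableSpace X] (d : X → X → ℝ) (μ : Measure X) (w : X → ℝ) : Prop :=
  Measurable w ∧ (∀ x, 0 < w x) ∧
    ∀ (x : X) (r : ℝ), 0 < r → IntegrableOn w (qball d x r) μ

/-- `C` is an upper bound for the Muckenhoupt `A_p` characteristic `[w]_{A_p}`. -/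
def IsApBound [MeasurableSpace X] (d : X → X → ℝ) (μ : Measure X) (p : ℝ) (w : X → ℝ)
    (C : ℝ) : Prop :=
  ∀ (x : X) (r : ℝ), 0 < r →
    (∫ z in qball d x r, w z ∂μ) *
      (∫ z in qball d x r, (w z) ^ (-(1 / (p - 1))) ∂μ) ^ (p - 1)
      ≤ C * ((μ (qball d x r)).toReal) ^ p

/-- Conjugate exponent `p' = p/(p-1)`. -/
def conjExp (p : ℝ) : ℝ := p / (p - 1)

/-- Average `⟨b⟩_E` of a (complex-valued) function over a set. -/
def cavg [MeasurableSpace X] (μ : Measure X) (b : X → ℂ) (E : Set X) : ℂ :=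
  ((μ E).toReal)⁻¹ • ∫ x in E, b x ∂μ

/-- Oscillation `∫_E |b - ⟨b⟩_E| dμ`. -/
def osc [MeasurableSpace X] (μ : Measure X) (b : X → ℂ) (E : Set X) : ℝ :=
  ∫ x in E, norm (b x - cavg μ b E) ∂μ

/-- `N` is an upper bound for the weighted fractional BMO norm `‖b‖_{BMO_w^α}`,
where `Qd` is the upper dimension of the measure. -/
def BMOBound [MeasurableSpace X] (d : X → X → ℝ) (μ : Measure X) (w : X → ℝ)
    (Qd α : ℝ) (b : X → ℂ) (N : ℝ) : Prop :=
  ∀ (x : X) (r : ℝ), 0 < r →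
    osc μ b (qball d x r)
      ≤ N * (wInt μ w (qball d x r)) ^ (α / Qd) * wInt μ w (qball d x r)

/-- Local integrability (integrability on all balls). -/
def LocInt [MeasurableSpace X] (d : X → X → ℝ) (μ : Measure X) (b : X → ℂ) : Prop :=
  Measurable b ∧ ∀ (x : X) (r : ℝ), 0 < r → IntegrableOn b (qball d x r) μ

/-- Bounded function. -/
def BddFun (f : X → ℂ) : Prop := ∃ M : ℝ, ∀ x, norm (f x) ≤ M

/-- Boundedly supported function. -/
def BddSupp (d : X → X → ℝ) (f : X → ℂ) : Prop :=
  ∃ (x : X) (r : ℝ), ∀ y, f y ≠ 0 → d x y < r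

/-- `L^∞_bs(X)`: bounded functions with bounded support. -/
def Linftybs (d : X → X → ℝ) : Set (X → ℂ) := {f | BddFun f ∧ BddSupp d f}

/-- `L¹_bs(X)`: integrable functions with bounded support. -/
def L1bs [MeasurableSpace X] (d : X → X → ℝ) (μ : Measure X) : Set (X → ℂ) :=
  {f | Integrable f μ ∧ BddSupp d f}

/-- `L^∞(E)`: bounded functions vanishing outside `E`. -/
def MemLinfty (f : X → ℂ) (E : Set X) : Prop := BddFun f ∧ ∀ x ∉ E, f x = 0

/-- `L^∞₀(E)`: bounded integrable functions vanishing outside `E` with mean zero. -/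
def MemLinfty0 [MeasurableSpace X] (μ : Measure X) (f : X → ℂ) (E : Set X) : Prop :=
  MemLinfty f E ∧ Integrable f μ ∧ (∫ x, f x ∂μ) = 0

/-- Supremum norm of a complex-valued function. -/
def supNorm (f : X → ℂ) : ℝ := ⨆ x, norm (f x)

/-- Supremum norm of a real-valued function. -/
def supNormR (g : X → ℝ) : ℝ := ⨆ x, |g x|

/-- `T ∈ SIO(K, 𝓕)`: on `𝓕`, `T` is represented by the kernel `K` off the support. -/
def SIO [MeasurableSpace X] (d : X → X → ℝ) (μ : Measure X) (K : X → X → ℂ)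
    (F : Set (X → ℂ)) (T : (X → ℂ) → X → ℂ) : Prop :=
  ∀ f ∈ F, ∀ x ∉ qsupp d f, T f x = ∫ y, K x y * f y ∂μ

/-- A Calderón–Zygmund operator: bounded on `L²` and represented by the kernel off
the support (for `f` in `L²` or in `L¹`). -/
structure IsCZO [MeasurableSpace X] (d : X → X → ℝ) (μ : Measure X) (K : X → X → ℂ)
    (T : (X → ℂ) → X → ℂ) : Prop where
  bddL2 : ∃ M : ℝ≥0∞, ∀ f : X → ℂ, MemLp f 2 μ →
    MemLp (T f) 2 μ ∧ eLpNorm (T f) 2 μ ≤ M * eLpNorm f 2 μ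
  repr : ∀ f : X → ℂ, (MemLp f 2 μ ∨ Integrable f μ) →
    ∀ x ∉ qsupp d f, T f x = ∫ y, K x y * f y ∂μ

/-- The commutator `[b,T]f = b · Tf − T(bf)`. -/
def commut (b : X → ℂ) (T : (X → ℂ) → X → ℂ) (f : X → ℂ) : X → ℂ :=
  fun x => b x * T f x - T (fun y => b y * f y) x

/-- Weighted `L^p` norm `‖f‖_{L^p_w} = (∫ |f w|^p dμ)^{1/p}` (valued in `ℝ≥0∞`). -/
def wLpNorm [MeasurableSpace X] (μ : Measure X) (p : ℝ) (w : X → ℝ) (f : X → ℂ) : ℝ≥0∞ :=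
  (∫⁻ x, ENNReal.ofReal (norm (f x) * w x) ^ p ∂μ) ^ (1 / p)

/-- Weighted `L^q` norm of an `ℝ≥0∞`-valued function. -/
def wLqNormE [MeasurableSpace X] (μ : Measure X) (q : ℝ) (w : X → ℝ) (g : X → ℝ≥0∞) : ℝ≥0∞ :=
  (∫⁻ x, (g x * ENNReal.ofReal (w x)) ^ q ∂μ) ^ (1 / q)

/-- A system of dyadic cubes on `X`. -/
structure DyadicSystem [MeasurableSpace X] (d : X → X → ℝ) where
  δ : ℝ
  a1 : ℝ
  A1 : ℝ
  δ_pos : 0 < δ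
  δ_lt_one : δ < 1
  a1_pos : 0 < a1
  a1_le_A1 : a1 ≤ A1
  cubes : ℤ → Set (Set X)
  countable : ∀ k, (cubes k).Countable
  meas : ∀ k, ∀ Q ∈ cubes k, MeasurableSet Q
  cover : ∀ k, ⋃₀ cubes k = Set.univ
  pdisj : ∀ k, (cubes k).PairwiseDisjoint id
  nested : ∀ k l : ℤ, k ≤ l → ∀ Q ∈ cubes k, ∀ R ∈ cubes l, R ⊆ Q ∨ Disjoint Q R
  center : ∀ k : ℤ, ∀ Q ∈ cubes k, ∃ x : X,
    qball d x (a1 * δ ^ k) ⊆ Q ∧ Q ⊆ qball d x (A1 * δ ^ k)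

/-- An `η`-sparse family of dyadic cubes. -/
structure SparseFamily [MeasurableSpace X] (d : X → X → ℝ) (μ : Measure X)
    (D : DyadicSystem d) (η : ℝ) where
  S : Set (Set X)
  mem_dyadic : ∀ Q ∈ S, ∃ k, Q ∈ D.cubes k
  E : Set X → Set X
  E_sub : ∀ Q ∈ S, E Q ⊆ Q
  E_meas : ∀ Q ∈ S, MeasurableSet (E Q)
  E_dense : ∀ Q ∈ S, ENNReal.ofReal η * μ Q ≤ μ (E Q)
  overlap : ∃ N : ℕ, ∀ x : X, ∀ F : Finset (Set X),
    (↑F : Set (Set X)) ⊆ S → (∀ Q ∈ F, x ∈ E Q) → F.card ≤ N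

/-- Average of `|f|` over `P` (valued in `ℝ≥0∞`). -/
def avgAbs [MeasurableSpace X] (μ : Measure X) (f : X → ℂ) (P : Set X) : ℝ≥0∞ :=
  (∫⁻ x in P, ENNReal.ofReal (norm (f x)) ∂μ) / μ P

/-- The coefficient `l₁^p(P)^{1/p} l₂^{-q'}(P)^{1/q'} / μ(P)` of the two-weight
fractional sparse operator. -/
def sparseCoef [MeasurableSpace X] (μ : Measure X) (p q : ℝ) (l₁ l₂ : X → ℝ)
    (P : Set X) : ℝ≥0∞ :=
  (∫⁻ x in P, ENNReal.ofReal ((l₁ x) ^ p) ∂μ) ^ (1 / p)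
    * (∫⁻ x in P, ENNReal.ofReal ((l₂ x) ^ (-(conjExp q))) ∂μ) ^ (1 / conjExp q) / μ P

/-- The two-weight fractional sparse operator `𝒜^{p,q}_{l₁,l₂}(f;𝒮)`. -/
def sparseOp [MeasurableSpace X] (μ : Measure X) (p q : ℝ) (l₁ l₂ : X → ℝ)
    (S : Set (Set X)) (f : X → ℂ) (x : X) : ℝ≥0∞ :=
  ∑' P : S, Set.indicator (P : Set X)
    (fun _ => sparseCoef μ p q l₁ l₂ (P : Set X) * avgAbs μ f (P : Set X)) x

/-- The sparse operator `𝒜_{b,𝒮} f(x) = Σ_{Q∈𝒮} |b(x) − ⟨b⟩_Q| ⟨|f|⟩_Q χ_Q(x)`. -/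
def Asparse [MeasurableSpace X] (μ : Measure X) (b : X → ℂ) (S : Set (Set X))
    (f : X → ℂ) (x : X) : ℝ≥0∞ :=
  ∑' P : S, Set.indicator (P : Set X)
    (fun z => ENNReal.ofReal (norm (b z - cavg μ b (P : Set X)))
      * avgAbs μ f (P : Set X)) x

/-- The sparse operator `𝒜*_{b,𝒮} f(x) = Σ_{Q∈𝒮} ⟨|b − ⟨b⟩_Q| |f|⟩_Q χ_Q(x)`. -/
def AsparseStar [MeasurableSpace X] (μ : Measure X) (b : X → ℂ) (S : Set (Set X))
    (f : X → ℂ) (x : X) : ℝ≥0∞ :=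
  ∑' P : S, Set.indicator (P : Set X)
    (fun _ => (∫⁻ z in (P : Set X),
        ENNReal.ofReal (norm (b z - cavg μ b (P : Set X)) * norm (f z)) ∂μ)
      / μ (P : Set X)) x

/-- An admissible sextuple `(K, ξ, A, ε, B, B̃)` with `B = B(y₀,r)`, `B̃ = B(x₀,r)`. -/
structure Admissible [MeasurableSpace X] (d : X → X → ℝ) (μ : Measure X) (A₀ : ℝ)
    (K : X → X → ℂ) (ξ A ε r : ℝ) (y₀ x₀ : X) : Prop where
  r_pos : 0 < r
  xi_ge_one : 1 ≤ ξ
  A_ge : 2 * A₀ ^ 2 + A₀ ≤ A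
  eps_pos : 0 < ε
  sep : ∀ y ∈ qball d y₀ r, ∀ x ∈ qball d x₀ r, r ≤ d y x
  dist_lb : A * r ≤ d x₀ y₀
  dist_ub : d x₀ y₀ ≤ ξ * A * r
  K_ub : norm (K x₀ y₀) ≤ ξ / (μ (qball d y₀ (A * r))).toReal
  K_lb : 1 / (μ (qball d y₀ (A * r))).toReal ≤ ξ * norm (K x₀ y₀)
  int_y : ∀ x ∈ qball d x₀ r,
    ∫⁻ y in qball d y₀ r, ENNReal.ofReal (norm (K x y - K x₀ y₀)) ∂μ
      ≤ ENNReal.ofReal (ξ * ε) * μ (qball d y₀ r) / μ (qball d y₀ (A * r))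
  int_x : ∀ y ∈ qball d y₀ r,
    ∫⁻ x in qball d x₀ r, ENNReal.ofReal (norm (K x y - K x₀ y₀)) ∂μ
      ≤ ENNReal.ofReal (ξ * ε) * μ (qball d x₀ r) / μ (qball d y₀ (A * r))

end SHT

open SHT

/-!
On `B = B(y₀,r)` the admissibility estimates give
`T*g(y) = ∫_{B̃} K(x,y) g(x) dμ(x) ≈ K(x₀,y₀) ∫_{B̃} g`, with an error at most half the size of the
main term because `ε ≤ (2cξ²)⁻¹`. Hence `T*g` stays away from zero on `B`, and the identity
`f = g·Th − h·T*g + f̃` forces `h := -f / T*g` on `B` and `f̃ := -g·Th` on `B̃`. By Fubini,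
`∫ f̃ = -∫_B h·T*g = ∫ f = 0`. Finally `f̃` is small because
`Th(x) = ∫_B (K(x,y) − K(x₀,y₀)) h(y) dμ(y) + K(x₀,y₀) ∫_B h`, and `∫_B h` is small since `f` has
mean zero: `∫_B h = -∫_B f (1/T*g − 1/(K(x₀,y₀) ∫ g))`.

Fubini needs `K` to be measurable on `B̃ × B`, which is not assumed. It follows from the continuity
of `K` off the diagonal and from the separability of balls: a `ρ`-separated subset of a ball is
countable, since the balls of radius `ρ/(2A₀)` around its points are disjoint and have positive
measure inside a ball of finite measure.
-/

section Integrals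

variable {α β : Type*} [MeasurableSpace α] [MeasurableSpace β] {ν : Measure α}

theorem integrable_and_integral_norm_le_of_lintegral_le {F : α → ℂ}
    (hF : AEStronglyMeasurable F ν) {C : ℝ≥0∞} (hC : C ≠ ∞)
    (h : ∫⁻ x, ENNReal.ofReal ‖F x‖ ∂ν ≤ C) :
    Integrable F ν ∧ ∫ x, ‖F x‖ ∂ν ≤ C.toReal := by
  simp only [ofReal_norm] at h
  refine ⟨⟨hF, h.trans_lt hC.lt_top⟩, ?_⟩
  rw [integral_norm_eq_lintegral_enorm hF]
  exact ENNReal.toReal_mono hC h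

theorem norm_integral_mul_sub_const_mul_le [IsFiniteMeasure ν] {k u : α → ℂ} {k₀ : ℂ} {M : ℝ}
    (hk : Integrable (fun x => k x - k₀) ν) (hu : AEStronglyMeasurable u ν)
    (huM : ∀ᵐ x ∂ν, ‖u x‖ ≤ M) :
    ‖∫ x, k x * u x ∂ν - k₀ * ∫ x, u x ∂ν‖ ≤ M * ∫ x, ‖k x - k₀‖ ∂ν := by
  have hku : Integrable (fun x => (k x - k₀) * u x) ν := hk.mul_bdd hu huM
  have hu' : Integrable u ν := (integrable_const M).mono' hu huM
  have heq : ∫ x, k x * u x ∂ν - k₀ * ∫ x, u x ∂ν = ∫ x, (k x - k₀) * u x ∂ν := by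
    have hku' : Integrable (fun x => k x * u x) ν :=
      (hku.add (hu'.const_mul k₀)).congr
        (Eventually.of_forall fun x => by simp only [Pi.add_apply]; ring)
    rw [← integral_const_mul, ← integral_sub hku' (hu'.const_mul k₀)]
    simp only [sub_mul]
  rw [heq, ← integral_const_mul]
  refine norm_integral_le_of_norm_le (hk.norm.const_mul M) ?_
  filter_upwards [huM] with x hx
  rw [norm_mul, mul_comm]
  exact mul_le_mul_of_nonneg_right hx (norm_nonneg _)

/-- Since `u` has mean zero, `∫ u / H = ∫ u (1/H - 1/c)`, and `‖1/H - 1/c‖ ≤ E / (2δ²)`. -/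
theorem norm_integral_div_le [IsFiniteMeasure ν] {u H : α → ℂ} {c : ℂ} {M E δ : ℝ}
    (hu : Integrable u ν) (hu₀ : ∫ x, u x ∂ν = 0) (huM : ∀ᵐ x ∂ν, ‖u x‖ ≤ M)
    (hH : AEStronglyMeasurable H ν) (hHc : ∀ᵐ x ∂ν, ‖H x - c‖ ≤ E) (hδ : 0 < δ)
    (hHδ : ∀ᵐ x ∂ν, δ ≤ ‖H x‖) (hc : 2 * δ ≤ ‖c‖) :
    ‖∫ x, u x / H x ∂ν‖ ≤ M * (E / (2 * δ ^ 2)) * ν.real Set.univ := by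
  have hc₀ : c ≠ 0 := norm_pos_iff.1 (by linarith)
  have huH : Integrable (fun x => u x / H x) ν := by
    refine (integrable_const (M / δ)).mono'
      (hu.1.aemeasurable.div hH.aemeasurable).aestronglyMeasurable ?_
    filter_upwards [huM, hHδ] with x hx hδx
    rw [norm_div]
    exact div_le_div₀ ((norm_nonneg _).trans hx) hx hδ hδx
  have heq : ∫ x, u x / H x ∂ν = ∫ x, (u x / H x - u x / c) ∂ν := by
    rw [integral_sub huH (hu.div_const c), integral_div, hu₀, zero_div, sub_zero]
  rw [heq]
  refine norm_integral_le_of_norm_le_const ?_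
  filter_upwards [huM, hHc, hHδ] with x hx hHx hδx
  have hHx₀ : H x ≠ 0 := norm_pos_iff.1 (hδ.trans_le hδx)
  rw [div_sub_div _ _ hHx₀ hc₀, norm_div, norm_mul,
    show u x * c - H x * u x = u x * (c - H x) by ring, norm_mul, mul_div_assoc, norm_sub_rev]
  refine mul_le_mul hx (div_le_div₀ ((norm_nonneg _).trans hHx) hHx (by positivity) ?_)
    (by positivity) ((norm_nonneg _).trans hx)
  nlinarith [norm_nonneg (H x)]

variable {ν₁ : Measure α} {ν₂ : Measure β}

theorem integrable_prod_of_integral_norm_sub_le [IsFiniteMeasure ν₁] [IsFiniteMeasure ν₂]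
    {k : α × β → ℂ} {k₀ : ℂ} {C : ℝ}
    (hk : AEStronglyMeasurable k (ν₁.prod ν₂))
    (hint : ∀ᵐ x ∂ν₁, Integrable (fun y => k (x, y) - k₀) ν₂)
    (hC : ∀ᵐ x ∂ν₁, ∫ y, ‖k (x, y) - k₀‖ ∂ν₂ ≤ C) :
    Integrable k (ν₁.prod ν₂) := by
  have hsub : Integrable (fun q => k q - k₀) (ν₁.prod ν₂) := by
    refine (integrable_prod_iff (hk.sub aestronglyMeasurable_const)).2 ⟨hint, ?_⟩
    refine (integrable_const C).mono'
      (hk.sub aestronglyMeasurable_const).norm.integral_prod_right' ?_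
    filter_upwards [hC] with x hx
    rwa [Real.norm_of_nonneg (integral_nonneg fun _ => norm_nonneg _)]
  exact (hsub.add (integrable_const k₀)).congr (Eventually.of_forall fun q => by simp)

theorem MeasureTheory.AEStronglyMeasurable.integral_kernel_mul_right [SFinite ν₂] {k : α × β → ℂ}
    (hk : AEStronglyMeasurable k (ν₁.prod ν₂)) {v : β → ℂ} (hv : AEStronglyMeasurable v ν₂) :
    AEStronglyMeasurable (fun x => ∫ y, k (x, y) * v y ∂ν₂) ν₁ :=
  (hk.mul hv.comp_snd).integral_prod_right'

theorem MeasureTheory.AEStronglyMeasurable.integral_kernel_mul_left [SFinite ν₁] [SFinite ν₂]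
    {k : α × β → ℂ} (hk : AEStronglyMeasurable k (ν₁.prod ν₂)) {u : α → ℂ}
    (hu : AEStronglyMeasurable u ν₁) :
    AEStronglyMeasurable (fun y => ∫ x, k (x, y) * u x ∂ν₁) ν₂ :=
  (hk.prod_swap.mul hu.comp_snd).integral_prod_right'

theorem integral_mul_integral_kernel_comm [SFinite ν₁] [SFinite ν₂] {k : α × β → ℂ}
    {u : α → ℂ} {v : β → ℂ} {M N : ℝ}
    (hk : Integrable k (ν₁.prod ν₂)) (hu : AEStronglyMeasurable u ν₁) (huM : ∀ x, ‖u x‖ ≤ M)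
    (hv : AEStronglyMeasurable v ν₂) (hvN : ∀ y, ‖v y‖ ≤ N) :
    ∫ x, u x * ∫ y, k (x, y) * v y ∂ν₂ ∂ν₁ = ∫ y, (∫ x, k (x, y) * u x ∂ν₁) * v y ∂ν₂ := by
  have hint : Integrable (Function.uncurry fun x y => k (x, y) * (u x * v y)) (ν₁.prod ν₂) := by
    refine hk.mul_bdd (c := M * N) (hu.comp_fst.mul hv.comp_snd)
      (Eventually.of_forall fun q => ?_)
    rw [norm_mul]
    exact mul_le_mul (huM _) (hvN _) (norm_nonneg _) ((norm_nonneg _).trans (huM q.1))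
  convert integral_integral_swap hint using 1
  · congr 1; ext x; rw [← integral_const_mul]; congr 1; ext y; ring
  · congr 1; ext y; rw [← integral_mul_const]; congr 1; ext x; ring

end Integrals

namespace SHT

variable {X : Type*} {d : X → X → ℝ}

section Functions

theorem BddFun.norm_le_supNorm {f : X → ℂ} (hf : BddFun f) (x : X) : ‖f x‖ ≤ supNorm f := by
  obtain ⟨M, hM⟩ := hf
  exact le_ciSup (f := fun x => ‖f x‖) ⟨M, by rintro _ ⟨y, rfl⟩; exact hM y⟩ x

theorem supNorm_nonneg (f : X → ℂ) : 0 ≤ supNorm f := Real.iSup_nonneg fun _ => norm_nonneg _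

theorem le_supNormR_of_nonneg {g : X → ℝ} (hg₀ : ∀ x, 0 ≤ g x) (hgM : ∃ M, ∀ x, g x ≤ M)
    (x : X) : g x ≤ supNormR g := by
  obtain ⟨M, hM⟩ := hgM
  have hbdd : BddAbove (Set.range fun x => |g x|) :=
    ⟨M, by rintro _ ⟨y, rfl⟩; exact (abs_of_nonneg (hg₀ y)).trans_le (hM y)⟩
  exact (le_abs_self _).trans (le_ciSup (f := fun x => |g x|) hbdd x)

theorem mem_Linftybs {f : X → ℂ} {M : ℝ} (hM : ∀ x, ‖f x‖ ≤ M) {z : X} {R : ℝ}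
    (hf : ∀ y ∉ qball d z R, f y = 0) : f ∈ Linftybs d :=
  ⟨⟨M, hM⟩, z, R, fun y hy => by_contra fun h => hy (hf y h)⟩

theorem norm_indicator_neg_div_le {S : Set X} {f H : X → ℂ} {M δ : ℝ} (hfM : ∀ x, ‖f x‖ ≤ M)
    (hδ : 0 < δ) (hHδ : ∀ y ∈ S, δ ≤ ‖H y‖) (y : X) :
    ‖S.indicator (fun y => -f y / H y) y‖ ≤ M / δ := by
  by_cases hy : y ∈ S
  · rw [Set.indicator_of_mem hy, norm_div, norm_neg]
    exact div_le_div₀ ((norm_nonneg _).trans (hfM y)) (hfM y) hδ (hHδ y hy)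
  · rw [Set.indicator_of_notMem hy, norm_zero]
    exact div_nonneg ((norm_nonneg _).trans (hfM y)) hδ.le

theorem memLinfty_indicator_neg_div {S : Set X} {f H : X → ℂ} {M : ℝ}
    (hM : ∀ y, ‖S.indicator (fun y => -f y / H y) y‖ ≤ M) :
    MemLinfty (S.indicator fun y => -f y / H y) {y | y ∈ S ∧ f y ≠ 0} := by
  refine ⟨⟨M, hM⟩, fun y hy => ?_⟩
  by_cases hyS : y ∈ S
  · simp [Set.indicator_of_mem hyS, not_and_not_right.1 hy hyS]
  · exact Set.indicator_of_notMem hyS _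

theorem norm_indicator_neg_mul_le {S : Set X} {g : X → ℝ} {Φ : X → ℂ} {N M : ℝ}
    (hgN : ∀ x, |g x| ≤ N) (hΦ : ∀ x ∈ S, ‖Φ x‖ ≤ M) (hM : 0 ≤ M) (x : X) :
    ‖S.indicator (fun x => -((g x : ℂ) * Φ x)) x‖ ≤ N * M := by
  by_cases hx : x ∈ S
  · rw [Set.indicator_of_mem hx, norm_neg, norm_mul, Complex.norm_real, Real.norm_eq_abs]
    exact mul_le_mul (hgN x) (hΦ x hx) (norm_nonneg _) ((abs_nonneg _).trans (hgN x))
  · rw [Set.indicator_of_notMem hx, norm_zero]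
    exact mul_nonneg ((abs_nonneg _).trans (hgN x)) hM

theorem factorization_eq {B B' : Set X} (hBB' : Disjoint B B') {f g H Th Tsg Φ : X → ℂ}
    (hf : ∀ x ∉ B, f x = 0) (hg : ∀ x ∉ B', g x = 0) (hH : ∀ y ∈ B, H y ≠ 0)
    (hTsg : ∀ y ∈ B, Tsg y = H y) (hTh : ∀ x ∈ B', Th x = Φ x) (x : X) :
    f x = g x * Th x - B.indicator (fun y => -f y / H y) x * Tsg x +
      B'.indicator (fun x => -(g x * Φ x)) x := by
  by_cases hx : x ∈ B
  · have hx' : x ∉ B' := Set.disjoint_left.1 hBB' hx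
    rw [Set.indicator_of_mem hx, Set.indicator_of_notMem hx', hg x hx', hTsg x hx,
      div_mul_cancel₀ _ (hH x hx)]
    ring
  · rw [Set.indicator_of_notMem hx, hf x hx]
    by_cases hx' : x ∈ B'
    · rw [Set.indicator_of_mem hx', hTh x hx']
      ring
    · rw [Set.indicator_of_notMem hx', hg x hx']
      ring

end Functions

section QuasiMetric

variable [MeasurableSpace X] {μ : Measure X} {A₀ Cμ : ℝ}

theorem IsSHT.dist_self (hX : IsSHT d μ A₀ Cμ) (x : X) : d x x = 0 :=
  (hX.eq_zero_iff x x).2 rfl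

theorem IsSHT.mem_ball_self (hX : IsSHT d μ A₀ Cμ) (x : X) {ρ : ℝ} (hρ : 0 < ρ) :
    x ∈ qball d x ρ := by
  simpa [qball, hX.dist_self] using hρ

theorem IsSHT.dist_pos (hX : IsSHT d μ A₀ Cμ) {x y : X} (h : x ≠ y) : 0 < d x y :=
  (hX.nonneg x y).lt_of_ne fun h0 => h ((hX.eq_zero_iff x y).1 h0.symm)

theorem IsSHT.A0_pos (hX : IsSHT d μ A₀ Cμ) : 0 < A₀ := one_pos.trans_le hX.one_le_A0

theorem IsSHT.isFiniteMeasure_restrict_ball (hX : IsSHT d μ A₀ Cμ) (x : X) (ρ : ℝ) :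
    IsFiniteMeasure (μ.restrict (qball d x ρ)) :=
  isFiniteMeasure_restrict.2 (hX.ball_ne_top x ρ).ne

theorem IsSHT.measureReal_ball_pos (hX : IsSHT d μ A₀ Cμ) (x : X) {ρ : ℝ} (hρ : 0 < ρ) :
    0 < (μ (qball d x ρ)).toReal :=
  ENNReal.toReal_pos (hX.ball_pos x ρ hρ).ne' (hX.ball_ne_top x ρ).ne

/-- Balls need not be open for a quasi-metric, but the points at positive distance from `S` form
an open set. -/
theorem IsSHT.notMem_qsupp (hX : IsSHT d μ A₀ Cμ) {f : X → ℂ} {S : Set X}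
    (hf : ∀ z, f z ≠ 0 → z ∈ S) {x : X} {t : ℝ} (ht : 0 < t) (hx : ∀ w ∈ S, t ≤ d x w) :
    x ∉ qsupp d f := by
  intro hsupp
  have hA₀ := hX.A0_pos
  have hU : dOpen d {z | ∃ s, 0 < s ∧ ∀ w ∈ S, s ≤ d z w} := by
    rintro z ⟨s, hs, hz⟩
    refine ⟨s / (2 * A₀), by positivity, fun z' hz' =>
      ⟨s / (2 * A₀), by positivity, fun w hw => ?_⟩⟩
    have h₁ := hX.triangle z w z'
    have h₂ := hz w hw
    have h₃ : d z z' * (2 * A₀) < s := (lt_div_iff₀ (by positivity)).1 hz'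
    rw [div_le_iff₀ (by positivity)]
    nlinarith
  obtain ⟨w, ⟨s, hs, hw⟩, hfw⟩ := hsupp _ hU ⟨t, ht, hx⟩
  have := hw w (hf w hfw)
  rw [hX.dist_self] at this
  linarith

theorem SIO.apply_eq_setIntegral (hX : IsSHT d μ A₀ Cμ) {K : X → X → ℂ} {F : Set (X → ℂ)}
    {T : (X → ℂ) → X → ℂ} (hT : SIO d μ K F T) {f : X → ℂ} (hf : f ∈ F) {S : Set X}
    (hfS : ∀ y ∉ S, f y = 0) {x : X} {t : ℝ} (ht : 0 < t) (hx : ∀ w ∈ S, t ≤ d x w) :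
    T f x = ∫ y in S, K x y * f y ∂μ := by
  rw [hT f hf x (hX.notMem_qsupp (fun z hz => by_contra fun h => hz (hfS z h)) ht hx),
    setIntegral_eq_integral_of_forall_compl_eq_zero fun y hy => by rw [hfS y hy, mul_zero]]

theorem IsSHT.countable_of_separated (hX : IsSHT d μ A₀ Cμ) {M : Set X} {z₀ : X} {R ρ : ℝ}
    (hρ : 0 < ρ) (hM : M ⊆ qball d z₀ R) (hsep : M.Pairwise fun a b => ρ ≤ d a b) :
    M.Countable := by
  have hA₀ := hX.A0_pos
  set s := ρ / (2 * A₀)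
  have hs : 0 < s := by positivity
  have hdisj : Pairwise (Function.onFun Disjoint fun a : M => qball d a s) := by
    intro a b hab
    refine Set.disjoint_left.2 fun w hwa hwb => ?_
    have h₁ := hX.triangle a b w
    have h₂ := hsep a.2 b.2 (Subtype.coe_ne_coe.2 hab)
    rw [hX.symm w b] at h₁
    have hwa : d a w < s := hwa
    have hwb : d b w < s := hwb
    have h₃ : A₀ * (d a w + d b w) < A₀ * (2 * s) := by gcongr; linarith
    have h₄ : A₀ * (2 * s) = ρ := by simp only [s]; field_simp
    linarith
  have hsub : (⋃ a : M, qball d a s) ⊆ qball d z₀ (A₀ * (R + s)) := by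
    simp only [Set.iUnion_subset_iff]
    intro a w hw
    have h₁ := hX.triangle z₀ w a
    have h₂ : d z₀ a < R := hM a.2
    have h₃ : d a w < s := hw
    show d z₀ w < A₀ * (R + s)
    nlinarith
  have hcount := Measure.countable_meas_pos_of_disjoint_of_meas_iUnion_ne_top μ
    (fun a : M => hX.meas_ball a s) hdisj
    (ne_top_of_le_ne_top (hX.ball_ne_top _ _).ne (measure_mono hsub))
  simp only [hX.ball_pos _ _ hs, Set.ofPred_true, Set.countable_univ_iff] at hcount
  exact Set.countable_coe_iff.1 hcount

theorem IsSHT.exists_countable_net (hX : IsSHT d μ A₀ Cμ) {S : Set X} {z₀ : X} {R : ℝ}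
    (hS : S ⊆ qball d z₀ R) {ρ : ℝ} (hρ : 0 < ρ) :
    ∃ M ⊆ S, M.Countable ∧ ∀ y ∈ S, ∃ a ∈ M, d a y < ρ := by
  obtain ⟨M, ⟨hMS, hMsep⟩, hmax⟩ :=
    zorn_subset {M : Set X | M ⊆ S ∧ M.Pairwise fun a b => ρ ≤ d a b} fun c hc hchain =>
      ⟨⋃₀ c, ⟨Set.sUnion_subset fun M hM => (hc hM).1,
        hchain.pairwise_sUnion.2 fun M hM => (hc hM).2⟩, fun M hM => Set.subset_sUnion_of_mem hM⟩
  refine ⟨M, hMS, hX.countable_of_separated hρ (hMS.trans hS) hMsep, fun y hy => ?_⟩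
  by_contra! hfar
  have hins : insert y M ∈ {M : Set X | M ⊆ S ∧ M.Pairwise fun a b => ρ ≤ d a b} :=
    ⟨Set.insert_subset hy hMS, hMsep.insert fun b hb _ => ⟨hX.symm y b ▸ hfar b hb, hfar b hb⟩⟩
  have hyM : y ∈ M := hmax hins (Set.subset_insert y M) (Set.mem_insert y M)
  have := hfar y hyM
  rw [hX.dist_self] at this
  linarith

theorem IsSHT.exists_seq_dense (hX : IsSHT d μ A₀ Cμ) (z₀ : X) {R : ℝ} (hR : 0 < R) :
    ∃ e : ℕ → X, (∀ i, e i ∈ qball d z₀ R) ∧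
      ∀ y ∈ qball d z₀ R, ∀ ρ > 0, ∃ i, d (e i) y < ρ := by
  choose M hMS hMc hMnet using fun n : ℕ =>
    hX.exists_countable_net (subset_refl (qball d z₀ R)) (Nat.one_div_pos_of_nat (n := n))
  obtain ⟨a, ha, -⟩ := hMnet 0 z₀ (hX.mem_ball_self z₀ hR)
  obtain ⟨e, he⟩ := (Set.countable_iUnion hMc).exists_eq_range ⟨a, Set.mem_iUnion.2 ⟨0, ha⟩⟩
  refine ⟨e, fun i => ?_, fun y hy ρ hρ => ?_⟩
  · obtain ⟨n, hn⟩ := Set.mem_iUnion.1 (he ▸ Set.mem_range_self i)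
    exact hMS n hn
  · obtain ⟨n, hn⟩ := exists_nat_one_div_lt hρ
    obtain ⟨a, ha, hay⟩ := hMnet n y hy
    obtain ⟨i, rfl⟩ : a ∈ Set.range e := he ▸ Set.mem_iUnion.2 ⟨n, ha⟩
    exact ⟨i, hay.trans hn⟩

end QuasiMetric

section IndicatorIntegrals

variable [MeasurableSpace X] {μ : Measure X}

theorem setIntegral_mul_indicator_neg_div {S : Set X} (hS : MeasurableSet S) {f H : X → ℂ}
    (hH : ∀ y ∈ S, H y ≠ 0) (hfS : ∀ y ∉ S, f y = 0) :
    ∫ y in S, H y * S.indicator (fun y => -f y / H y) y ∂μ = -∫ y, f y ∂μ := by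
  rw [← setIntegral_eq_integral_of_forall_compl_eq_zero hfS, ← integral_neg]
  refine setIntegral_congr_fun hS fun y hy => ?_
  rw [Set.indicator_of_mem hy, mul_div_cancel₀ _ (hH y hy)]

theorem norm_setIntegral_indicator_neg_div_le {S : Set X} (hS : MeasurableSet S)
    (hμS : μ S ≠ ∞) {f H : X → ℂ} {c : ℂ} {M E δ : ℝ} (hf : Integrable f μ)
    (hfS : ∀ y ∉ S, f y = 0) (hf₀ : ∫ y, f y ∂μ = 0) (hfM : ∀ y, ‖f y‖ ≤ M)
    (hH : AEStronglyMeasurable H (μ.restrict S)) (hHc : ∀ y ∈ S, ‖H y - c‖ ≤ E) (hδ : 0 < δ)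
    (hHδ : ∀ y ∈ S, δ ≤ ‖H y‖) (hc : 2 * δ ≤ ‖c‖) :
    ‖∫ y in S, S.indicator (fun y => -f y / H y) y ∂μ‖ ≤ M * (E / (2 * δ ^ 2)) * (μ S).toReal := by
  have := isFiniteMeasure_restrict.2 hμS
  rw [setIntegral_congr_fun hS fun y hy => Set.indicator_of_mem hy _, ← measureReal_def,
    ← measureReal_restrict_apply_univ]
  refine norm_integral_div_le hf.neg.restrict ?_
    (Eventually.of_forall fun y => by simpa using hfM y) hH (ae_restrict_of_forall_mem hS hHc) hδ
    (ae_restrict_of_forall_mem hS hHδ) hc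
  rw [integral_neg, setIntegral_eq_integral_of_forall_compl_eq_zero hfS, hf₀, neg_zero]

theorem memLinfty0_indicator_neg_mul {S : Set X} (hS : MeasurableSet S) (hμS : μ S ≠ ∞)
    {g : X → ℝ} {Φ : X → ℂ} {N M : ℝ} (hg : Measurable g) (hgN : ∀ x, |g x| ≤ N)
    (hΦ : AEStronglyMeasurable Φ (μ.restrict S))
    (hΦM : ∀ x ∈ S, ‖Φ x‖ ≤ M) (hM : 0 ≤ M) (h₀ : ∫ x in S, (g x : ℂ) * Φ x ∂μ = 0) :
    MemLinfty0 μ (S.indicator fun x => -((g x : ℂ) * Φ x)) {x | x ∈ S ∧ g x ≠ 0} := by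
  have := isFiniteMeasure_restrict.2 hμS
  refine ⟨⟨⟨N * M, norm_indicator_neg_mul_le hgN hΦM hM⟩, fun x hx => ?_⟩, ?_, ?_⟩
  · by_cases hxS : x ∈ S
    · rw [Set.indicator_of_mem hxS, not_and_not_right.1 hx hxS]
      simp
    · exact Set.indicator_of_notMem hxS _
  · refine (integrable_indicator_iff hS).2 ((integrable_const (N * M)).mono'
      ((Complex.measurable_ofReal.comp hg).aestronglyMeasurable.mul hΦ).neg
      (ae_restrict_of_forall_mem hS fun x hx => ?_))
    simpa [Set.indicator_of_mem hx] using norm_indicator_neg_mul_le hgN hΦM hM x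
  · rw [integral_indicator hS, integral_neg, h₀, neg_zero]

end IndicatorIntegrals

section KernelMeasurability

open Topology

/-- The `m`-th approximant evaluates `φ` at the first index `n` with `d (e n) (π y) < 2⁻ᵐ`, which
depends measurably on `y`. -/
theorem measurable_indicator_of_tendsto_dense {Y β : Type*} [MeasurableSpace Y]
    [TopologicalSpace β] [TopologicalSpace.PseudoMetrizableSpace β] [MeasurableSpace β]
    [BorelSpace β] [Zero β] (hd : ∀ x y, 0 ≤ d x y) {π : Y → X} {S : Set X}
    (hS : MeasurableSet (π ⁻¹' S)) (hball : ∀ x ρ, MeasurableSet (π ⁻¹' qball d x ρ))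
    {e : ℕ → X} (he : ∀ x ∈ S, ∀ ρ > 0, ∃ i, d (e i) x < ρ)
    {φ : ℕ → Y → β} (hφ : ∀ n, Measurable (φ n)) {F : Y → β}
    (hF : ∀ y, π y ∈ S → ∀ u : ℕ → ℕ, Tendsto (fun m => d (e (u m)) (π y)) atTop (𝓝 0) →
      Tendsto (fun m => φ (u m) y) atTop (𝓝 (F y))) :
    Measurable ((π ⁻¹' S).indicator F) := by
  classical
  have hex : ∀ m y, ∃ n, π y ∈ S → d (e n) (π y) < (1 / 2 : ℝ) ^ m := fun m y => by
    by_cases hy : π y ∈ S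
    · obtain ⟨n, hn⟩ := he _ hy ((1 / 2 : ℝ) ^ m) (by positivity)
      exact ⟨n, fun _ => hn⟩
    · exact ⟨0, fun h => absurd h hy⟩
  have hmeas : ∀ m, Measurable ((π ⁻¹' S).indicator fun y => φ (Nat.find (hex m y)) y) := by
    refine fun m => (Measurable.find hφ (fun n => ?_) (hex m)).indicator hS
    have : {y | π y ∈ S → d (e n) (π y) < (1 / 2 : ℝ) ^ m} =
        (π ⁻¹' S)ᶜ ∪ π ⁻¹' qball d (e n) ((1 / 2 : ℝ) ^ m) := by
      ext y; simp only [qball, imp_iff_not_or]; rfl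
    rw [this]
    exact hS.compl.union (hball _ _)
  refine measurable_of_tendsto_metrizable' atTop hmeas (tendsto_pi_nhds.2 fun y => ?_)
  by_cases hy : π y ∈ S
  · simp only [Set.indicator_of_mem (Set.mem_preimage.2 hy)]
    refine hF y hy _ (squeeze_zero (fun m => hd _ _) (fun m => (Nat.find_spec (hex m y) hy).le) ?_)
    exact tendsto_pow_atTop_nhds_zero_of_lt_one (by norm_num) (by norm_num)
  · simp only [Set.indicator_of_notMem (show y ∉ π ⁻¹' S from hy)]
    exact tendsto_const_nhds

variable [MeasurableSpace X] {μ : Measure X} {A₀ Cμ : ℝ} {K : X → X → ℂ} {cK : ℝ}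
  {ω : ℝ → ℝ}

theorem IsCZKernel.tendsto_norm_sub (hX : IsSHT d μ A₀ Cμ) (hK : IsCZKernel d μ A₀ K cK ω)
    {x y : X} (hxy : x ≠ y) {ι : Type*} {l : Filter ι} {z : ι → X}
    (hz : Tendsto (fun i => d x (z i)) l (𝓝 0)) :
    Tendsto (fun i => ‖K x y - K (z i) y‖ + ‖K y x - K y (z i)‖) l (𝓝 0) := by
  have hxy' := hX.dist_pos hxy
  have hA₀ := hX.A0_pos
  have hnear : ∀ᶠ i in l, d x (z i) < (2 * A₀)⁻¹ * d x y :=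
    hz.eventually_lt_const (mul_pos (by positivity) hxy')
  set t : ι → ℝ := fun i => d x (z i) / d x y
  have ht : Tendsto t l (𝓝 0) := by simpa using hz.div_const (d x y)
  have htmem : ∀ᶠ i in l, t i ∈ Set.Icc (0 : ℝ) 1 := by
    filter_upwards [hnear] with i hi
    refine ⟨div_nonneg (hX.nonneg _ _) hxy'.le, (div_le_one hxy').2 (hi.le.trans ?_)⟩
    have : (2 * A₀)⁻¹ ≤ 1 := inv_le_one_of_one_le₀ (by linarith [hX.one_le_A0])
    nlinarith
  have hω : Tendsto (fun i => ω (t i)) l (𝓝 0) := by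
    have := ((hK.omega_cont 0 ⟨le_rfl, zero_le_one⟩).tendsto).comp
      (tendsto_nhdsWithin_iff.2 ⟨ht, htmem⟩)
    rwa [hK.omega_zero] at this
  refine squeeze_zero' (Eventually.of_forall fun i => by positivity) ?_
    (by simpa using hω.div_const (μ (qball d x (d x y))).toReal)
  filter_upwards [hnear] with i hi
  exact hK.regularity x (z i) y hxy hi

theorem IsCZKernel.tendsto_left (hX : IsSHT d μ A₀ Cμ) (hK : IsCZKernel d μ A₀ K cK ω)
    {x y : X} (hxy : x ≠ y) {ι : Type*} {l : Filter ι} {z : ι → X}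
    (hz : Tendsto (fun i => d x (z i)) l (𝓝 0)) :
    Tendsto (fun i => K (z i) y) l (𝓝 (K x y)) := by
  refine tendsto_iff_norm_sub_tendsto_zero.2 (squeeze_zero (fun _ => norm_nonneg _)
    (fun i => ?_) (hK.tendsto_norm_sub hX hxy hz))
  rw [norm_sub_rev]
  exact le_add_of_nonneg_right (norm_nonneg _)

theorem IsCZKernel.tendsto_right (hX : IsSHT d μ A₀ Cμ) (hK : IsCZKernel d μ A₀ K cK ω)
    {x y : X} (hxy : x ≠ y) {ι : Type*} {l : Filter ι} {z : ι → X}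
    (hz : Tendsto (fun i => d x (z i)) l (𝓝 0)) :
    Tendsto (fun i => K y (z i)) l (𝓝 (K y x)) := by
  refine tendsto_iff_norm_sub_tendsto_zero.2 (squeeze_zero (fun _ => norm_nonneg _)
    (fun i => ?_) (hK.tendsto_norm_sub hX hxy hz))
  rw [norm_sub_rev]
  exact le_add_of_nonneg_left (norm_nonneg _)

theorem IsCZKernel.measurable_indicator_ball (hX : IsSHT d μ A₀ Cμ)
    (hK : IsCZKernel d μ A₀ K cK ω) {z₀ z : X} {R : ℝ} (hR : 0 < R) (hz : z ∉ qball d z₀ R) :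
    Measurable ((qball d z₀ R).indicator (K z)) := by
  obtain ⟨e, -, he⟩ := hX.exists_seq_dense z₀ hR
  refine measurable_indicator_of_tendsto_dense (π := id) (S := qball d z₀ R) hX.nonneg
    (hX.meas_ball z₀ R) hX.meas_ball he (φ := fun n _ => K z (e n)) (fun n => measurable_const)
    fun y hy u hu => ?_
  refine hK.tendsto_right hX (fun hyz : y = z => hz (hyz ▸ hy)) ?_
  simpa only [id, hX.symm y] using hu

theorem IsCZKernel.measurable_indicator_prod (hX : IsSHT d μ A₀ Cμ)
    (hK : IsCZKernel d μ A₀ K cK ω) {z₁ z₂ : X} {R₁ R₂ : ℝ} (hR₁ : 0 < R₁) (hR₂ : 0 < R₂)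
    (hdisj : Disjoint (qball d z₁ R₁) (qball d z₂ R₂)) :
    Measurable ((qball d z₁ R₁ ×ˢ qball d z₂ R₂).indicator (Function.uncurry K)) := by
  obtain ⟨e, he₁, he⟩ := hX.exists_seq_dense z₁ hR₁
  have heq : (qball d z₁ R₁ ×ˢ qball d z₂ R₂).indicator (Function.uncurry K) =
      (Prod.fst ⁻¹' qball d z₁ R₁).indicator fun q => (qball d z₂ R₂).indicator (K q.1) q.2 := by
    ext q
    by_cases h₁ : q.1 ∈ qball d z₁ R₁ <;> by_cases h₂ : q.2 ∈ qball d z₂ R₂ <;>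
      simp [Set.indicator, Function.uncurry, h₁, h₂]
  rw [heq]
  refine measurable_indicator_of_tendsto_dense hX.nonneg
    (measurable_fst (hX.meas_ball z₁ R₁)) (fun x ρ => measurable_fst (hX.meas_ball x ρ)) he
    (φ := fun n q => (qball d z₂ R₂).indicator (K (e n)) q.2)
    (fun n => (hK.measurable_indicator_ball hX hR₂
      (Set.disjoint_left.1 hdisj (he₁ n))).comp measurable_snd) fun q hq u hu => ?_
  by_cases h₂ : q.2 ∈ qball d z₂ R₂
  · simp only [Set.indicator_of_mem h₂]
    refine hK.tendsto_left hX (fun h : q.1 = q.2 => Set.disjoint_left.1 hdisj hq (h ▸ h₂)) ?_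
    simpa only [hX.symm q.1] using hu
  · simp only [Set.indicator_of_notMem h₂]
    exact tendsto_const_nhds

end KernelMeasurability

section Admissible

variable [MeasurableSpace X] {μ : Measure X} {A₀ Cμ : ℝ} {K : X → X → ℂ} {cK : ℝ}
  {ω : ℝ → ℝ} {ξ A ε r : ℝ} {y₀ x₀ : X}

theorem Admissible.A_pos (hX : IsSHT d μ A₀ Cμ) (hadm : Admissible d μ A₀ K ξ A ε r y₀ x₀) :
    0 < A := by
  nlinarith [hadm.A_ge, hX.one_le_A0]

theorem Admissible.disjoint (hX : IsSHT d μ A₀ Cμ) (hadm : Admissible d μ A₀ K ξ A ε r y₀ x₀) :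
    Disjoint (qball d y₀ r) (qball d x₀ r) := by
  refine Set.disjoint_left.2 fun z hz hz' => ?_
  have := hadm.sep z hz z hz'
  rw [hX.dist_self] at this
  linarith [hadm.r_pos]

theorem Admissible.measurable_indicator_prod (hX : IsSHT d μ A₀ Cμ)
    (hK : IsCZKernel d μ A₀ K cK ω) (hadm : Admissible d μ A₀ K ξ A ε r y₀ x₀) :
    Measurable ((qball d x₀ r ×ˢ qball d y₀ r).indicator (Function.uncurry K)) :=
  hK.measurable_indicator_prod hX hadm.r_pos hadm.r_pos (hadm.disjoint hX).symm

theorem Admissible.aestronglyMeasurable_prod (hX : IsSHT d μ A₀ Cμ)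
    (hK : IsCZKernel d μ A₀ K cK ω) (hadm : Admissible d μ A₀ K ξ A ε r y₀ x₀) :
    AEStronglyMeasurable (Function.uncurry K)
      ((μ.restrict (qball d x₀ r)).prod (μ.restrict (qball d y₀ r))) := by
  have := hX.isFiniteMeasure_restrict_ball y₀ r
  refine (hadm.measurable_indicator_prod hX hK).aestronglyMeasurable.congr ?_
  filter_upwards [Measure.quasiMeasurePreserving_fst.ae (ae_restrict_mem (hX.meas_ball x₀ r)),
    Measure.quasiMeasurePreserving_snd.ae (ae_restrict_mem (hX.meas_ball y₀ r))] with q h₁ h₂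
  exact Set.indicator_of_mem (Set.mk_mem_prod h₁ h₂) _

theorem Admissible.aestronglyMeasurable_left (hX : IsSHT d μ A₀ Cμ)
    (hK : IsCZKernel d μ A₀ K cK ω) (hadm : Admissible d μ A₀ K ξ A ε r y₀ x₀) {y : X}
    (hy : y ∈ qball d y₀ r) :
    AEStronglyMeasurable (fun x => K x y) (μ.restrict (qball d x₀ r)) := by
  have heq : (fun x => (qball d x₀ r ×ˢ qball d y₀ r).indicator (Function.uncurry K) (x, y)) =
      (qball d x₀ r).indicator fun x => K x y := by
    ext x; by_cases hx : x ∈ qball d x₀ r <;> simp [Set.indicator, hx, hy]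
  rw [← aestronglyMeasurable_indicator_iff (hX.meas_ball x₀ r), ← heq]
  exact ((hadm.measurable_indicator_prod hX hK).comp measurable_prodMk_right).aestronglyMeasurable

theorem Admissible.aestronglyMeasurable_right (hX : IsSHT d μ A₀ Cμ)
    (hK : IsCZKernel d μ A₀ K cK ω) (hadm : Admissible d μ A₀ K ξ A ε r y₀ x₀) {x : X}
    (hx : x ∈ qball d x₀ r) :
    AEStronglyMeasurable (K x) (μ.restrict (qball d y₀ r)) := by
  have heq : (fun y => (qball d x₀ r ×ˢ qball d y₀ r).indicator (Function.uncurry K) (x, y)) =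
      (qball d y₀ r).indicator (K x) := by
    ext y; by_cases hy : y ∈ qball d y₀ r <;> simp [Set.indicator, hx, hy]
  rw [← aestronglyMeasurable_indicator_iff (hX.meas_ball y₀ r), ← heq]
  exact ((hadm.measurable_indicator_prod hX hK).comp measurable_prodMk_left).aestronglyMeasurable

theorem Admissible.integrableOn_and_integral_norm_sub_le_left (hX : IsSHT d μ A₀ Cμ)
    (hK : IsCZKernel d μ A₀ K cK ω) (hadm : Admissible d μ A₀ K ξ A ε r y₀ x₀) {y : X}
    (hy : y ∈ qball d y₀ r) :
    IntegrableOn (fun x => K x y - K x₀ y₀) (qball d x₀ r) μ ∧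
      ∫ x in qball d x₀ r, ‖K x y - K x₀ y₀‖ ∂μ ≤
        ξ * ε * (μ (qball d x₀ r)).toReal / (μ (qball d y₀ (A * r))).toReal := by
  have hfin : ENNReal.ofReal (ξ * ε) * μ (qball d x₀ r) / μ (qball d y₀ (A * r)) ≠ ∞ :=
    ENNReal.div_ne_top (ENNReal.mul_ne_top ENNReal.ofReal_ne_top (hX.ball_ne_top _ _).ne)
      (hX.ball_pos _ _ (mul_pos (hadm.A_pos hX) hadm.r_pos)).ne'
  obtain ⟨hint, hle⟩ := integrable_and_integral_norm_le_of_lintegral_le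
    ((hadm.aestronglyMeasurable_left hX hK hy).sub aestronglyMeasurable_const) hfin
    (hadm.int_x y hy)
  refine ⟨hint, hle.trans_eq ?_⟩
  rw [ENNReal.toReal_div, ENNReal.toReal_mul,
    ENNReal.toReal_ofReal (mul_pos (by linarith [hadm.xi_ge_one]) hadm.eps_pos).le]

theorem Admissible.integrableOn_and_integral_norm_sub_le_right (hX : IsSHT d μ A₀ Cμ)
    (hK : IsCZKernel d μ A₀ K cK ω) (hadm : Admissible d μ A₀ K ξ A ε r y₀ x₀) {x : X}
    (hx : x ∈ qball d x₀ r) :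
    IntegrableOn (fun y => K x y - K x₀ y₀) (qball d y₀ r) μ ∧
      ∫ y in qball d y₀ r, ‖K x y - K x₀ y₀‖ ∂μ ≤
        ξ * ε * (μ (qball d y₀ r)).toReal / (μ (qball d y₀ (A * r))).toReal := by
  have hfin : ENNReal.ofReal (ξ * ε) * μ (qball d y₀ r) / μ (qball d y₀ (A * r)) ≠ ∞ :=
    ENNReal.div_ne_top (ENNReal.mul_ne_top ENNReal.ofReal_ne_top (hX.ball_ne_top _ _).ne)
      (hX.ball_pos _ _ (mul_pos (hadm.A_pos hX) hadm.r_pos)).ne'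
  obtain ⟨hint, hle⟩ := integrable_and_integral_norm_le_of_lintegral_le
    ((hadm.aestronglyMeasurable_right hX hK hx).sub aestronglyMeasurable_const) hfin
    (hadm.int_y x hx)
  refine ⟨hint, hle.trans_eq ?_⟩
  rw [ENNReal.toReal_div, ENNReal.toReal_mul,
    ENNReal.toReal_ofReal (mul_pos (by linarith [hadm.xi_ge_one]) hadm.eps_pos).le]

theorem Admissible.integrable_prod (hX : IsSHT d μ A₀ Cμ) (hK : IsCZKernel d μ A₀ K cK ω)
    (hadm : Admissible d μ A₀ K ξ A ε r y₀ x₀) :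
    Integrable (Function.uncurry K)
      ((μ.restrict (qball d x₀ r)).prod (μ.restrict (qball d y₀ r))) := by
  have := hX.isFiniteMeasure_restrict_ball x₀ r
  have := hX.isFiniteMeasure_restrict_ball y₀ r
  exact integrable_prod_of_integral_norm_sub_le (hadm.aestronglyMeasurable_prod hX hK)
    (ae_restrict_of_forall_mem (hX.meas_ball x₀ r) fun x hx =>
      (hadm.integrableOn_and_integral_norm_sub_le_right hX hK hx).1)
    (ae_restrict_of_forall_mem (hX.meas_ball x₀ r) fun x hx =>
      (hadm.integrableOn_and_integral_norm_sub_le_right hX hK hx).2)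

theorem Admissible.setIntegral_mul_setIntegral_comm (hX : IsSHT d μ A₀ Cμ)
    (hK : IsCZKernel d μ A₀ K cK ω) (hadm : Admissible d μ A₀ K ξ A ε r y₀ x₀) {u v : X → ℂ}
    {M N : ℝ} (hu : AEStronglyMeasurable u (μ.restrict (qball d x₀ r))) (huM : ∀ x, ‖u x‖ ≤ M)
    (hv : AEStronglyMeasurable v (μ.restrict (qball d y₀ r))) (hvN : ∀ y, ‖v y‖ ≤ N) :
    ∫ x in qball d x₀ r, u x * ∫ y in qball d y₀ r, K x y * v y ∂μ ∂μ =
      ∫ y in qball d y₀ r, (∫ x in qball d x₀ r, K x y * u x ∂μ) * v y ∂μ := by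
  have := hX.isFiniteMeasure_restrict_ball x₀ r
  have := hX.isFiniteMeasure_restrict_ball y₀ r
  exact integral_mul_integral_kernel_comm (hadm.integrable_prod hX hK) hu huM hv hvN

theorem Admissible.norm_integral_left_sub_le (hX : IsSHT d μ A₀ Cμ)
    (hK : IsCZKernel d μ A₀ K cK ω) (hadm : Admissible d μ A₀ K ξ A ε r y₀ x₀) {u : X → ℂ}
    {M : ℝ} (hu : AEStronglyMeasurable u (μ.restrict (qball d x₀ r))) (huM : ∀ x, ‖u x‖ ≤ M)
    {y : X} (hy : y ∈ qball d y₀ r) :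
    ‖∫ x in qball d x₀ r, K x y * u x ∂μ - K x₀ y₀ * ∫ x in qball d x₀ r, u x ∂μ‖ ≤
      M * (ξ * ε * (μ (qball d x₀ r)).toReal / (μ (qball d y₀ (A * r))).toReal) := by
  have := hX.isFiniteMeasure_restrict_ball x₀ r
  obtain ⟨hint, hle⟩ := hadm.integrableOn_and_integral_norm_sub_le_left hX hK hy
  exact (norm_integral_mul_sub_const_mul_le hint hu (Eventually.of_forall huM)).trans
    (mul_le_mul_of_nonneg_left hle ((norm_nonneg _).trans (huM y)))

theorem Admissible.norm_integral_right_sub_le (hX : IsSHT d μ A₀ Cμ)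
    (hK : IsCZKernel d μ A₀ K cK ω) (hadm : Admissible d μ A₀ K ξ A ε r y₀ x₀) {v : X → ℂ}
    {M : ℝ} (hv : AEStronglyMeasurable v (μ.restrict (qball d y₀ r))) (hvM : ∀ y, ‖v y‖ ≤ M)
    {x : X} (hx : x ∈ qball d x₀ r) :
    ‖∫ y in qball d y₀ r, K x y * v y ∂μ - K x₀ y₀ * ∫ y in qball d y₀ r, v y ∂μ‖ ≤
      M * (ξ * ε * (μ (qball d y₀ r)).toReal / (μ (qball d y₀ (A * r))).toReal) := by
  have := hX.isFiniteMeasure_restrict_ball y₀ r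
  obtain ⟨hint, hle⟩ := hadm.integrableOn_and_integral_norm_sub_le_right hX hK hx
  exact (norm_integral_mul_sub_const_mul_le hint hv (Eventually.of_forall hvM)).trans
    (mul_le_mul_of_nonneg_left hle ((norm_nonneg _).trans (hvM x)))

theorem Admissible.two_mul_le_norm_mul_integral (hX : IsSHT d μ A₀ Cμ)
    (hadm : Admissible d μ A₀ K ξ A ε r y₀ x₀) {c : ℝ} (hc : 0 < c) {g : X → ℝ} {N : ℝ}
    (hN : 0 ≤ N) (hg₀ : ∀ x, 0 ≤ g x)
    (hgavg : N ≤ c / (μ (qball d x₀ r)).toReal * ∫ x in qball d x₀ r, g x ∂μ) :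
    2 * (N * (μ (qball d x₀ r)).toReal / (2 * c * ξ * (μ (qball d y₀ (A * r))).toReal)) ≤
      ‖K x₀ y₀ * ∫ x in qball d x₀ r, (g x : ℂ) ∂μ‖ := by
  have hb := hX.measureReal_ball_pos x₀ hadm.r_pos
  have ha := hX.measureReal_ball_pos y₀ (mul_pos (hadm.A_pos hX) hadm.r_pos)
  have hξ : 0 < ξ := one_pos.trans_le hadm.xi_ge_one
  have hK₀ := hadm.K_lb
  set a := (μ (qball d y₀ (A * r))).toReal
  set I := ∫ x in qball d x₀ r, g x ∂μ
  have hI : N * (μ (qball d x₀ r)).toReal / c ≤ I := by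
    rw [div_mul_eq_mul_div, le_div_iff₀ hb] at hgavg
    rwa [div_le_iff₀ hc, mul_comm I]
  rw [integral_complex_ofReal, norm_mul, Complex.norm_real,
    Real.norm_of_nonneg (setIntegral_nonneg (hX.meas_ball x₀ r) fun x _ => hg₀ x)]
  calc 2 * (N * (μ (qball d x₀ r)).toReal / (2 * c * ξ * a))
      = 1 / (ξ * a) * (N * (μ (qball d x₀ r)).toReal / c) := by field_simp
    _ ≤ ‖K x₀ y₀‖ * I := by
      refine mul_le_mul ?_ hI (by positivity) (norm_nonneg _)
      rw [div_le_iff₀ (by positivity)]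
      rw [div_le_iff₀ ha] at hK₀
      linarith

theorem Admissible.le_norm_integral_left (hX : IsSHT d μ A₀ Cμ)
    (hK : IsCZKernel d μ A₀ K cK ω) (hadm : Admissible d μ A₀ K ξ A ε r y₀ x₀) {c : ℝ}
    (hc : 0 < c) (hε : ε ≤ (2 * c * ξ ^ 2)⁻¹) {g : X → ℝ} (hgm : Measurable g)
    (hg₀ : ∀ x, 0 ≤ g x) {N : ℝ} (hgN : ∀ x, g x ≤ N)
    (hgavg : N ≤ c / (μ (qball d x₀ r)).toReal * ∫ x in qball d x₀ r, g x ∂μ) {y : X}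
    (hy : y ∈ qball d y₀ r) :
    N * (μ (qball d x₀ r)).toReal / (2 * c * ξ * (μ (qball d y₀ (A * r))).toReal) ≤
      ‖∫ x in qball d x₀ r, K x y * g x ∂μ‖ := by
  have hN : 0 ≤ N := (hg₀ y).trans (hgN y)
  have hb := hX.measureReal_ball_pos x₀ hadm.r_pos
  have ha := hX.measureReal_ball_pos y₀ (mul_pos (hadm.A_pos hX) hadm.r_pos)
  have hξ : 0 < ξ := one_pos.trans_le hadm.xi_ge_one
  have herr := hadm.norm_integral_left_sub_le hX hK (u := fun x => (g x : ℂ)) (M := N)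
    (Complex.measurable_ofReal.comp hgm).aestronglyMeasurable
    (fun x => by simpa [abs_of_nonneg (hg₀ x)] using hgN x) hy
  have htwo := hadm.two_mul_le_norm_mul_integral hX hc hN hg₀ hgavg
  have hsmall : N * (ξ * ε * (μ (qball d x₀ r)).toReal / (μ (qball d y₀ (A * r))).toReal) ≤
      N * (μ (qball d x₀ r)).toReal / (2 * c * ξ * (μ (qball d y₀ (A * r))).toReal) := by
    have hε' : ε * (2 * c * ξ ^ 2) ≤ 1 :=
      (mul_le_mul_of_nonneg_right hε (by positivity)).trans_eq (inv_mul_cancel₀ (by positivity))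
    calc N * (ξ * ε * (μ (qball d x₀ r)).toReal / (μ (qball d y₀ (A * r))).toReal)
        = ε * (2 * c * ξ ^ 2) *
          (N * (μ (qball d x₀ r)).toReal / (2 * c * ξ * (μ (qball d y₀ (A * r))).toReal)) := by
          field_simp
      _ ≤ _ := mul_le_of_le_one_left (by positivity) hε'
  have := norm_sub_norm_le (K x₀ y₀ * ∫ x in qball d x₀ r, (g x : ℂ) ∂μ)
    (∫ x in qball d x₀ r, K x y * g x ∂μ)
  rw [norm_sub_rev] at this
  linarith

theorem Admissible.norm_integral_right_le (hX : IsSHT d μ A₀ Cμ)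
    (hK : IsCZKernel d μ A₀ K cK ω) (hadm : Admissible d μ A₀ K ξ A ε r y₀ x₀) {v : X → ℂ}
    {M J : ℝ} (hv : AEStronglyMeasurable v (μ.restrict (qball d y₀ r))) (hvM : ∀ y, ‖v y‖ ≤ M)
    (hJ : ‖∫ y in qball d y₀ r, v y ∂μ‖ ≤ J) {x : X} (hx : x ∈ qball d x₀ r) :
    ‖∫ y in qball d y₀ r, K x y * v y ∂μ‖ ≤
      M * (ξ * ε * (μ (qball d y₀ r)).toReal / (μ (qball d y₀ (A * r))).toReal) +
        ξ / (μ (qball d y₀ (A * r))).toReal * J := by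
  have hK₀ : ‖K x₀ y₀ * ∫ y in qball d y₀ r, v y ∂μ‖ ≤
      ξ / (μ (qball d y₀ (A * r))).toReal * J := by
    rw [norm_mul]
    exact mul_le_mul hadm.K_ub hJ (norm_nonneg _)
      (div_nonneg (one_pos.trans_le hadm.xi_ge_one).le ENNReal.toReal_nonneg)
  have := norm_le_norm_sub_add (∫ y in qball d y₀ r, K x y * v y ∂μ)
    (K x₀ y₀ * ∫ y in qball d y₀ r, v y ∂μ)
  linarith [hadm.norm_integral_right_sub_le hX hK hv hvM hx]

theorem Admissible.exists_factorization_of_le_norm (hX : IsSHT d μ A₀ Cμ)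
    (hK : IsCZKernel d μ A₀ K cK ω) (hadm : Admissible d μ A₀ K ξ A ε r y₀ x₀)
    {T Ts : (X → ℂ) → X → ℂ} (hT : SIO d μ K (Linftybs d) T)
    (hTs : SIO d μ (fun x y => K y x) (Linftybs d) Ts) {f : X → ℂ}
    (hf : MemLinfty0 μ f (qball d y₀ r)) {g : X → ℝ} (hgm : Measurable g)
    (hgB : ∀ x ∉ qball d x₀ r, g x = 0) {N : ℝ} (hgN : ∀ x, |g x| ≤ N) {c₀ : ℂ} {E δ : ℝ}
    (hδ : 0 < δ) (hc₀ : 2 * δ ≤ ‖c₀‖)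
    (hHc : ∀ y ∈ qball d y₀ r, ‖∫ x in qball d x₀ r, K x y * g x ∂μ - c₀‖ ≤ E)
    (hHδ : ∀ y ∈ qball d y₀ r, δ ≤ ‖∫ x in qball d x₀ r, K x y * g x ∂μ‖) :
    ∃ h ft : X → ℂ,
      (∀ x, f x = (g x : ℂ) * T h x - h x * Ts (fun z => (g z : ℂ)) x + ft x) ∧
      MemLinfty0 μ ft {x | x ∈ qball d x₀ r ∧ g x ≠ 0} ∧
      MemLinfty h {y | y ∈ qball d y₀ r ∧ f y ≠ 0} ∧
      supNorm h ≤ supNorm f / δ ∧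
      supNorm ft ≤ N * (supNorm f / δ *
        (ξ * ε * (μ (qball d y₀ r)).toReal / (μ (qball d y₀ (A * r))).toReal) +
        ξ / (μ (qball d y₀ (A * r))).toReal *
          (supNorm f * (E / (2 * δ ^ 2)) * (μ (qball d y₀ r)).toReal)) := by
  have := hX.isFiniteMeasure_restrict_ball x₀ r
  have := hX.isFiniteMeasure_restrict_ball y₀ r
  obtain ⟨⟨hfbdd, hfB⟩, hfint, hf₀⟩ := hf
  have hgC : ∀ x, ‖(g x : ℂ)‖ ≤ N := fun x => by simpa using hgN x
  have hgCm : Measurable fun x => (g x : ℂ) := Complex.measurable_ofReal.comp hgm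
  have hgCB : ∀ x ∉ qball d x₀ r, (g x : ℂ) = 0 := fun x hx => by simp [hgB x hx]
  set H : X → ℂ := fun y => ∫ x in qball d x₀ r, K x y * g x ∂μ
  have hH₀ : ∀ y ∈ qball d y₀ r, H y ≠ 0 := fun y hy => norm_pos_iff.1 (hδ.trans_le (hHδ y hy))
  have hH : AEStronglyMeasurable H (μ.restrict (qball d y₀ r)) :=
    (hadm.aestronglyMeasurable_prod hX hK).integral_kernel_mul_left hgCm.aestronglyMeasurable
  set h := (qball d y₀ r).indicator fun y => -f y / H y
  have hhB : ∀ y ∉ qball d y₀ r, h y = 0 := fun y hy => Set.indicator_of_notMem hy _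
  have hhm : AEStronglyMeasurable h (μ.restrict (qball d y₀ r)) :=
    (hfint.1.restrict.neg.aemeasurable.div hH.aemeasurable).aestronglyMeasurable.indicator
      (hX.meas_ball y₀ r)
  have hhM : ∀ y, ‖h y‖ ≤ supNorm f / δ := norm_indicator_neg_div_le hfbdd.norm_le_supNorm hδ hHδ
  have hJ := norm_setIntegral_indicator_neg_div_le (hX.meas_ball y₀ r) (hX.ball_ne_top _ _).ne
    hfint hfB hf₀ hfbdd.norm_le_supNorm hH hHc hδ hHδ hc₀
  set Φ : X → ℂ := fun x => ∫ y in qball d y₀ r, K x y * h y ∂μ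
  have hΦ : ∀ x ∈ qball d x₀ r, ‖Φ x‖ ≤ _ := fun x hx =>
    hadm.norm_integral_right_le hX hK hhm hhM hJ hx
  have hmean : ∫ x in qball d x₀ r, (g x : ℂ) * Φ x ∂μ = 0 := by
    rw [hadm.setIntegral_mul_setIntegral_comm hX hK hgCm.aestronglyMeasurable hgC hhm hhM,
      setIntegral_mul_indicator_neg_div (hX.meas_ball y₀ r) hH₀ hfB, hf₀, neg_zero]
  have hTs' : ∀ y ∈ qball d y₀ r, Ts (fun z => (g z : ℂ)) y = H y := fun y hy =>
    hTs.apply_eq_setIntegral hX (mem_Linftybs hgC hgCB) hgCB hadm.r_pos (hadm.sep y hy)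
  have hT' : ∀ x ∈ qball d x₀ r, T h x = Φ x := fun x hx =>
    hT.apply_eq_setIntegral hX (mem_Linftybs hhM hhB) hhB hadm.r_pos
      (fun w hw => (hadm.sep w hw x hx).trans_eq (hX.symm w x))
  have hΦ₀ : (0 : ℝ) ≤ _ := (norm_nonneg _).trans (hΦ x₀ (hX.mem_ball_self x₀ hadm.r_pos))
  refine ⟨h, _, factorization_eq (hadm.disjoint hX) hfB hgCB hH₀ hTs' hT',
    memLinfty0_indicator_neg_mul (hX.meas_ball x₀ r) (hX.ball_ne_top _ _).ne hgm hgN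
      ((hadm.aestronglyMeasurable_prod hX hK).integral_kernel_mul_right hhm) hΦ hΦ₀ hmean,
    memLinfty_indicator_neg_div hhM, Real.iSup_le hhM ((norm_nonneg _).trans (hhM y₀)),
    Real.iSup_le (norm_indicator_neg_mul_le hgN hΦ hΦ₀)
      (mul_nonneg ((abs_nonneg _).trans (hgN x₀)) hΦ₀)⟩

end Admissible

end SHT

theorem stmt16_general {X : Type*} [MeasurableSpace X]
    (d : X → X → ℝ) (μ : MeasureTheory.Measure X) (A₀ Cμ : ℝ)
    (hX : IsSHT d μ A₀ Cμ)
    (K : X → X → ℂ) (cK : ℝ) (ω : ℝ → ℝ)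
    (hK : IsCZKernel d μ A₀ K cK ω)
    (ξ A ε r : ℝ) (y₀ x₀ : X)
    (hadm : Admissible d μ A₀ K ξ A ε r y₀ x₀)
    (T Ts : (X → ℂ) → X → ℂ)
    (hT : SIO d μ K (Linftybs d) T)
    (hTs : SIO d μ (fun x y => K y x) (Linftybs d) Ts)
    (c : ℝ) (hc : 1 ≤ c) (hε : ε ≤ (2 * c * ξ ^ 2)⁻¹) :
    ∃ C : ℝ, 0 < C ∧
      ∀ (f : X → ℂ) (g : X → ℝ), Measurable g →
        MemLinfty0 μ f (qball d y₀ r) →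
        (∀ x, 0 ≤ g x) → (∀ x ∉ qball d x₀ r, g x = 0) → (∃ M : ℝ, ∀ x, g x ≤ M) →
        0 < supNormR g →
        supNormR g ≤ c / (μ (qball d x₀ r)).toReal * ∫ x in qball d x₀ r, g x ∂μ →
        ∃ h ft : X → ℂ,
          (∀ x, f x = (g x : ℂ) * T h x - h x * Ts (fun z => (g z : ℂ)) x + ft x) ∧
          MemLinfty0 μ ft {x | x ∈ qball d x₀ r ∧ g x ≠ 0} ∧
          MemLinfty h {y | y ∈ qball d y₀ r ∧ f y ≠ 0} ∧
          supNormR g * supNorm h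
            ≤ C * ((μ (qball d y₀ (A * r))).toReal / (μ (qball d x₀ r)).toReal)
              * supNorm f ∧
          supNorm ft
            ≤ C * ε * ((μ (qball d y₀ r)).toReal / (μ (qball d x₀ r)).toReal)
              * supNorm f := by
  have hc₀ : 0 < c := one_pos.trans_le hc
  have hξ : 0 < ξ := one_pos.trans_le hadm.xi_ge_one
  have hb := hX.measureReal_ball_pos x₀ hadm.r_pos
  have ha := hX.measureReal_ball_pos y₀ (mul_pos (hadm.A_pos hX) hadm.r_pos)
  -- the bound on `f̃` attains this constant exactly, while `h` only needs `2cξ`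
  refine ⟨2 * c * ξ ^ 2 * (1 + c * ξ ^ 2), by positivity,
    fun f g hgm hf hg₀ hgB hgM hN hgavg => ?_⟩
  have hgN := le_supNormR_of_nonneg hg₀ hgM
  have hgabs : ∀ x, |g x| ≤ supNormR g := fun x => (abs_of_nonneg (hg₀ x)).trans_le (hgN x)
  obtain ⟨h, ft, hfac, hft, hh, hhsup, hftsup⟩ := hadm.exists_factorization_of_le_norm hX hK hT
    hTs hf hgm hgB hgabs (by positivity) (hadm.two_mul_le_norm_mul_integral hX hc₀ hN.le hg₀ hgavg)
    (fun y hy => hadm.norm_integral_left_sub_le hX hK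
      (Complex.measurable_ofReal.comp hgm).aestronglyMeasurable
      (fun x => by simpa using hgabs x) hy)
    (fun y hy => hadm.le_norm_integral_left hX hK hc₀ hε hgm hg₀ hgN hgavg hy)
  refine ⟨h, ft, hfac, hft, hh, ?_, hftsup.trans_eq (by field_simp)⟩
  have hξ₁ : 2 * c * ξ ≤ 2 * c * ξ ^ 2 * (1 + c * ξ ^ 2) := by
    rw [mul_assoc (2 * c)]
    exact mul_le_mul_of_nonneg_left ((le_self_pow₀ hadm.xi_ge_one two_ne_zero).trans
      (le_mul_of_one_le_right (by positivity) (le_add_of_nonneg_right (by positivity))))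
      (by positivity)
  calc supNormR g * supNorm h ≤ supNormR g * (supNorm f / _) :=
        mul_le_mul_of_nonneg_left hhsup hN.le
    _ = 2 * c * ξ * ((μ (qball d y₀ (A * r))).toReal / (μ (qball d x₀ r)).toReal) * supNorm f := by
        field_simp
    _ ≤ _ := by have := supNorm_nonneg f; gcongr

/-- Lemma 4.13 of the paper: approximate weak factorisation. -/
theorem stmt16 {X : Type*} [MeasurableSpace X] [Nonempty X]
    (d : X → X → ℝ) (μ : MeasureTheory.Measure X) (A₀ Cμ : ℝ)
    (hX : IsSHT d μ A₀ Cμ)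
    (K : X → X → ℂ) (cK : ℝ) (ω : ℝ → ℝ)
    (hK : IsCZKernel d μ A₀ K cK ω)
    (ξ A ε r : ℝ) (y₀ x₀ : X)
    (hadm : Admissible d μ A₀ K ξ A ε r y₀ x₀)
    (T Ts : (X → ℂ) → X → ℂ)
    (hT : SIO d μ K (Linftybs d) T)
    (hTs : SIO d μ (fun x y => K y x) (Linftybs d) Ts)
    (c : ℝ) (hc : 1 ≤ c) (hε : ε ≤ (2 * c * ξ ^ 2)⁻¹) :
    ∃ C : ℝ, 0 < C ∧
      ∀ (f : X → ℂ) (g : X → ℝ), Measurable g →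
        MemLinfty0 μ f (qball d y₀ r) →
        (∀ x, 0 ≤ g x) → (∀ x ∉ qball d x₀ r, g x = 0) → (∃ M : ℝ, ∀ x, g x ≤ M) →
        0 < supNormR g →
        supNormR g ≤ c / (μ (qball d x₀ r)).toReal * ∫ x in qball d x₀ r, g x ∂μ →
        ∃ h ft : X → ℂ,
          (∀ x, f x = (g x : ℂ) * T h x - h x * Ts (fun z => (g z : ℂ)) x + ft x) ∧
          MemLinfty0 μ ft {x | x ∈ qball d x₀ r ∧ g x ≠ 0} ∧
          MemLinfty h {y | y ∈ qball d y₀ r ∧ f y ≠ 0} ∧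
          supNormR g * supNorm h
            ≤ C * ((μ (qball d y₀ (A * r))).toReal / (μ (qball d x₀ r)).toReal)
              * supNorm f ∧
          supNorm ft
            ≤ C * ε * ((μ (qball d y₀ r)).toReal / (μ (qball d x₀ r)).toReal)
              * supNorm f :=
  stmt16_general d μ A₀ Cμ hX K cK ω hK ξ A ε r y₀ x₀ hadm T Ts hT hTs c hc hε
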